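/- Let G' be a signed graph whose positive edges form a spanning tree and whose negative edges are X'. For distinct x, y ∈ X', the symmetric difference C_{{x,y}} of the fundamental circuits C_x and C_y is either a balanced circuit, or a short barbell, or a disjoint union of two unbalanced circuits. -/

import Mathlib

open Finset
open scoped Classical

noncomputable section

namespace SignedCircuitCover

variable {V E : Type} [Fintype V] [Fintype E] [DecidableEq V] [DecidableEq E]

/-- `e` is a loop. -/
def IsLoop (ends : E → Sym2 V) (e : E) : Prop := (ends e).IsDiag

/-- The vertices incident with an edge of `F`. -/
def support (ends : E → Sym2 V) (F : Finset E) : Finset V :=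
  Finset.univ.filter fun v => ∃ e ∈ F, v ∈ ends e

/-- Degree of `v` in the subgraph with edge set `F` (a loop counts twice). -/
def degree (ends : E → Sym2 V) (F : Finset E) (v : V) : ℕ :=
  ∑ e ∈ F, (if ends e = Sym2.diag v then 2 else if v ∈ ends e then 1 else 0)

/-- Reachability inside the edge set `F`. -/
def Reach (ends : E → Sym2 V) (F : Finset E) : V → V → Prop :=
  Relation.ReflTransGen fun a b => ∃ e ∈ F, ends e = s(a, b)

/-- The subgraph with edge set `F` is connected. -/
def ConnectedOn (ends : E → Sym2 V) (F : Finset E) : Prop :=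
  ∀ u ∈ support ends F, ∀ v ∈ support ends F, Reach ends F u v

/-- The whole graph is connected. -/
def Connected (ends : E → Sym2 V) : Prop :=
  ∀ u v : V, Reach ends (Finset.univ : Finset E) u v

/-- `F` is the edge set of a circuit (connected, 2-regular; a loop is a circuit). -/
def IsCircuit (ends : E → Sym2 V) (F : Finset E) : Prop :=
  F.Nonempty ∧ ConnectedOn ends F ∧ ∀ v ∈ support ends F, degree ends F v = 2

/-- `F` is the edge set of an Eulerian subgraph (connected, all degrees even). -/
def IsEulerianOn (ends : E → Sym2 V) (F : Finset E) : Prop :=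
  ConnectedOn ends F ∧ ∀ v ∈ support ends F, Even (degree ends F v)

/-- Negative edges of `F` (`sgn e = true` means `e` is negative). -/
def negEdges (sgn : E → Bool) (F : Finset E) : Finset E := F.filter fun e => sgn e = true

def IsBalancedCircuit (ends : E → Sym2 V) (sgn : E → Bool) (F : Finset E) : Prop :=
  IsCircuit ends F ∧ Even (negEdges sgn F).card

def IsUnbalancedCircuit (ends : E → Sym2 V) (sgn : E → Bool) (F : Finset E) : Prop :=
  IsCircuit ends F ∧ Odd (negEdges sgn F).card

/-- `P` is the edge set of a path with (distinct) end-vertices `u` and `v`. -/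
def IsPath (ends : E → Sym2 V) (P : Finset E) (u v : V) : Prop :=
  P.Nonempty ∧ ConnectedOn ends P ∧ u ≠ v ∧
    u ∈ support ends P ∧ v ∈ support ends P ∧
    degree ends P u = 1 ∧ degree ends P v = 1 ∧
    ∀ w ∈ support ends P, w ≠ u → w ≠ v → degree ends P w = 2

/-- A short barbell: two unbalanced circuits meeting at exactly one vertex. -/
def IsShortBarbell (ends : E → Sym2 V) (sgn : E → Bool) (F : Finset E) : Prop :=
  ∃ C₁ C₂ : Finset E, Disjoint C₁ C₂ ∧ F = C₁ ∪ C₂ ∧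
    IsUnbalancedCircuit ends sgn C₁ ∧ IsUnbalancedCircuit ends sgn C₂ ∧
    ∃ v : V, support ends C₁ ∩ support ends C₂ = {v}

/-- A long barbell: two disjoint unbalanced circuits joined by a path meeting
them only at its end-vertices. -/
def IsLongBarbell (ends : E → Sym2 V) (sgn : E → Bool) (F : Finset E) : Prop :=
  ∃ (C₁ C₂ P : Finset E) (u v : V),
    Disjoint C₁ C₂ ∧ Disjoint C₁ P ∧ Disjoint C₂ P ∧ F = C₁ ∪ C₂ ∪ P ∧
    IsUnbalancedCircuit ends sgn C₁ ∧ IsUnbalancedCircuit ends sgn C₂ ∧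
    Disjoint (support ends C₁) (support ends C₂) ∧
    IsPath ends P u v ∧
    support ends P ∩ support ends C₁ = {u} ∧
    support ends P ∩ support ends C₂ = {v}

def IsBarbell (ends : E → Sym2 V) (sgn : E → Bool) (F : Finset E) : Prop :=
  IsShortBarbell ends sgn F ∨ IsLongBarbell ends sgn F

/-- A signed circuit: a balanced circuit, a short barbell or a long barbell. -/
def IsSignedCircuit (ends : E → Sym2 V) (sgn : E → Bool) (F : Finset E) : Prop :=
  IsBalancedCircuit ends sgn F ∨ IsShortBarbell ends sgn F ∨ IsLongBarbell ends sgn F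

/-- `e` is a bridge (cut-edge) of the subgraph with edge set `F`. -/
def IsBridgeIn (ends : E → Sym2 V) (F : Finset E) (e : E) : Prop :=
  e ∈ F ∧ ∀ a b : V, ends e = s(a, b) → ¬ Reach ends (F.erase e) a b

/-- The bridges of the whole graph. -/
def bridges (ends : E → Sym2 V) : Finset E :=
  Finset.univ.filter fun e => IsBridgeIn ends Finset.univ e

/-- The non-bridge edges of the whole graph. -/
def nonbridges (ends : E → Sym2 V) : Finset E := Finset.univ \ bridges ends

/-- Reachability inside `F` avoiding the vertex `x`. -/
def ReachAvoid (ends : E → Sym2 V) (F : Finset E) (x : V) : V → V → Prop :=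
  Relation.ReflTransGen fun a b => a ≠ x ∧ b ≠ x ∧ ∃ e ∈ F, ends e = s(a, b)

/-- `x` is a cut-vertex of the subgraph with edge set `F`. -/
def IsCutVertexOn (ends : E → Sym2 V) (F : Finset E) (x : V) : Prop :=
  ∃ a ∈ support ends F, ∃ b ∈ support ends F,
    a ≠ x ∧ b ≠ x ∧ Reach ends F a b ∧ ¬ ReachAvoid ends F x a b

/-- The subgraph with edge set `F` is 2-connected (connected and without cut-vertices). -/
def TwoConnectedOn (ends : E → Sym2 V) (F : Finset E) : Prop :=
  ConnectedOn ends F ∧ ∀ x : V, ¬ IsCutVertexOn ends F x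

/-- The whole graph is 2-connected. -/
def TwoConnected (ends : E → Sym2 V) : Prop :=
  Connected ends ∧ ∀ x : V, ¬ IsCutVertexOn ends (Finset.univ : Finset E) x

/-- Total length of a collection of subgraphs. -/
def totalLength (𝒞 : List (Finset E)) : ℕ := (𝒞.map Finset.card).sum

/-- The width of the edge `e` with respect to the collection `𝒞`. -/
def widthAt (𝒞 : List (Finset E)) (e : E) : ℕ := (𝒞.filter fun C => e ∈ C).length

/-- `𝒞` covers every edge of the graph. -/
def CoversAll (𝒞 : List (Finset E)) : Prop := ∀ e : E, ∃ C ∈ 𝒞, e ∈ C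

/-- A tree of Eulerian graphs: connected, and after deleting all bridges every
component is Eulerian (equivalently all degrees in the bridgeless part are even). -/
def IsTreeOfEulerian (ends : E → Sym2 V) : Prop :=
  Connected ends ∧ ∀ v : V, Even (degree ends (nonbridges ends) v)

/-- Non-bridge non-loop edges. -/
def nbnl (ends : E → Sym2 V) : Finset E :=
  (nonbridges ends).filter fun e => ¬ IsLoop ends e

/-- A tree of circuits: connected, and after deleting all bridges and loops every
vertex has degree 0 or 2 (each component is an isolated vertex or a circuit). -/
def IsTreeOfCircuits (ends : E → Sym2 V) : Prop :=
  Connected ends ∧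
    ∀ v : V, degree ends (nbnl ends) v = 0 ∨ degree ends (nbnl ends) v = 2

/-- The balloon containing `v`: the edge set of the component of `v` in the
graph of non-bridge non-loop edges. -/
def compBalloon (ends : E → Sym2 V) (v : V) : Finset E :=
  (nbnl ends).filter fun e => ∃ w ∈ ends e, Reach ends (nbnl ends) v w

/-- Valency of the balloon of `v`: the number of bridges and loops incident
with its component. -/
def balloonValency (ends : E → Sym2 V) (v : V) : ℕ :=
  (Finset.univ.filter fun e =>
    (IsBridgeIn ends Finset.univ e ∨ IsLoop ends e) ∧
      ∃ w ∈ ends e, Reach ends (nbnl ends) v w).card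

/-- A balloon consisting of a single negative loop. -/
def IsNegLoopBalloon (ends : E → Sym2 V) (sgn : E → Bool) (B : Finset E) : Prop :=
  ∃ e : E, IsLoop ends e ∧ sgn e = true ∧ B = {e}

/-- A leaf balloon: a negative loop, or a nontrivial balloon of valency 1. -/
def IsLeafBalloon (ends : E → Sym2 V) (sgn : E → Bool) (B : Finset E) : Prop :=
  IsNegLoopBalloon ends sgn B ∨
    ∃ v : V, B = compBalloon ends v ∧ B.Nonempty ∧ balloonValency ends v = 1

/-- A leaf circuit: a negative loop, or a balloon of valency 1 which is a circuit. -/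
def IsLeafCircuit (ends : E → Sym2 V) (sgn : E → Bool) (B : Finset E) : Prop :=
  IsNegLoopBalloon ends sgn B ∨
    ∃ v : V, B = compBalloon ends v ∧ IsCircuit ends B ∧ balloonValency ends v = 1

/-- An inner circuit: a balloon of valency at least 2 which is a circuit. -/
def IsInnerCircuit (ends : E → Sym2 V) (B : Finset E) : Prop :=
  ∃ v : V, B = compBalloon ends v ∧ IsCircuit ends B ∧ 2 ≤ balloonValency ends v

/-- Number of unbalanced circuits of a tree of circuits: negative loops together
with the unbalanced (nontrivial) balloons. -/
def numUnbalancedCircuits (ends : E → Sym2 V) (sgn : E → Bool) : ℕ :=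
  (Finset.univ.filter fun e : E => IsLoop ends e ∧ sgn e = true).card +
    Set.ncard {B : Finset E |
      (∃ v : V, B = compBalloon ends v) ∧ B.Nonempty ∧ Odd (negEdges sgn B).card}

/-- Flow-admissibility: every edge lies in a signed circuit (Bouchet). -/
def FlowAdmissible (ends : E → Sym2 V) (sgn : E → Bool) : Prop :=
  ∀ e : E, ∃ C : Finset E, IsSignedCircuit ends sgn C ∧ e ∈ C

/-- `e` has exactly one end-vertex in `U`. -/
def crosses (ends : E → Sym2 V) (U : Finset V) (e : E) : Prop :=
  ∃ a b : V, ends e = s(a, b) ∧ ((a ∈ U ∧ b ∉ U) ∨ (a ∉ U ∧ b ∈ U))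

/-- Switching the signature at the vertex set `U`. -/
def switch (ends : E → Sym2 V) (U : Finset V) (sgn : E → Bool) : E → Bool :=
  fun e => if crosses ends U e then ! (sgn e) else sgn e

/-- The number of negative edges of a signature. -/
def negCount (sgn : E → Bool) : ℕ := (Finset.univ.filter fun e => sgn e = true).card

/-- `sgn` is a minimum signature: no equivalent (switched) signature has fewer
negative edges. -/
def IsMinSignature (ends : E → Sym2 V) (sgn : E → Bool) : Prop :=
  ∀ U : Finset V, negCount sgn ≤ negCount (switch ends U sgn)

/-- `{e₁, e₂}` is a 2-edge-cut of the subgraph with edge set `F`. -/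
def IsTwoEdgeCut (ends : E → Sym2 V) (F : Finset E) (e₁ e₂ : E) : Prop :=
  e₁ ≠ e₂ ∧ e₁ ∈ F ∧ e₂ ∈ F ∧ ¬ IsBridgeIn ends F e₁ ∧ ¬ IsBridgeIn ends F e₂ ∧
    (∀ a b : V, ends e₁ = s(a, b) → ¬ Reach ends ((F.erase e₁).erase e₂) a b) ∧
    (∀ a b : V, ends e₂ = s(a, b) → ¬ Reach ends ((F.erase e₁).erase e₂) a b)

/-- `b` is a bridge of `F` whose removal leaves two parts which are both unbalanced. -/
def SeparatesUnbalanced (ends : E → Sym2 V) (sgn : E → Bool) (F : Finset E) (b : E) : Prop :=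
  IsBridgeIn ends F b ∧
    ∀ a c : V, ends b = s(a, c) →
      (∃ C ⊆ F.erase b, IsUnbalancedCircuit ends sgn C ∧
        ∃ w ∈ support ends C, Reach ends (F.erase b) a w) ∧
      (∃ C ⊆ F.erase b, IsUnbalancedCircuit ends sgn C ∧
        ∃ w ∈ support ends C, Reach ends (F.erase b) c w)

/-- `T` is a spanning tree of the whole graph: spanning, connected and acyclic. -/
def IsSpanningTree (ends : E → Sym2 V) (T : Finset E) : Prop :=
  (∀ u v : V, Reach ends T u v) ∧ ∀ C ⊆ T, ¬ IsCircuit ends C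

/- AUX START -/
set_option linter.unusedSectionVars false
section Aux
variable {V E : Type} [Fintype V] [Fintype E] [DecidableEq V] [DecidableEq E]
variable (ends : E → Sym2 V)

/-- contribution of an edge to the degree of a vertex -/
def econ (e : E) (v : V) : ℕ :=
  if ends e = Sym2.diag v then 2 else if v ∈ ends e then 1 else 0

lemma degree_eq_sum (F : Finset E) (v : V) :
    degree ends F v = ∑ e ∈ F, econ ends e v := rfl

variable {ends}

lemma econ_eq_zero {e : E} {v : V} (h : v ∉ ends e) : econ ends e v = 0 := by
  unfold econ
  rw [if_neg, if_neg h]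
  intro hd; apply h; rw [hd]; exact Sym2.mem_mk_left v v

lemma one_le_econ {e : E} {v : V} (h : v ∈ ends e) : 1 ≤ econ ends e v := by
  simp only [econ, if_pos h]
  split <;> omega

lemma econ_le_two (e : E) (v : V) : econ ends e v ≤ 2 := by
  unfold econ; split; · omega
  split <;> omega

lemma mem_support_iff {F : Finset E} {v : V} :
    v ∈ support ends F ↔ ∃ e ∈ F, v ∈ ends e := by
  simp [support]

lemma support_mono {F G : Finset E} (h : F ⊆ G) : support ends F ⊆ support ends G := by
  intro v hv
  rw [mem_support_iff] at hv ⊢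
  obtain ⟨e, he, hve⟩ := hv
  exact ⟨e, h he, hve⟩

lemma degree_mono {F G : Finset E} (h : F ⊆ G) (v : V) :
    degree ends F v ≤ degree ends G v := by
  rw [degree_eq_sum, degree_eq_sum]
  exact Finset.sum_le_sum_of_subset h

lemma degree_eq_zero_of_not_mem_support {F : Finset E} {v : V} (h : v ∉ support ends F) :
    degree ends F v = 0 := by
  rw [degree_eq_sum]
  apply Finset.sum_eq_zero
  intro e he
  apply econ_eq_zero
  intro hv
  exact h (mem_support_iff.2 ⟨e, he, hv⟩)

lemma one_le_degree {F : Finset E} {v : V} {e : E} (he : e ∈ F) (hv : v ∈ ends e) :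
    1 ≤ degree ends F v := by
  rw [degree_eq_sum]
  calc 1 ≤ econ ends e v := one_le_econ hv
  _ ≤ _ := Finset.single_le_sum (f := fun e => econ ends e v) (fun i _ => Nat.zero_le _) he

lemma mem_support_of_degree {F : Finset E} {v : V} (h : 1 ≤ degree ends F v) :
    v ∈ support ends F := by
  by_contra hc
  rw [degree_eq_zero_of_not_mem_support hc] at h
  omega

lemma degree_sdiff_add {F G : Finset E} (h : G ⊆ F) (v : V) :
    degree ends (F \ G) v + degree ends G v = degree ends F v := by
  rw [degree_eq_sum, degree_eq_sum, degree_eq_sum]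
  exact Finset.sum_sdiff h

lemma degree_union_inter (A B : Finset E) (v : V) :
    degree ends (A ∪ B) v + degree ends (A ∩ B) v = degree ends A v + degree ends B v := by
  rw [degree_eq_sum, degree_eq_sum, degree_eq_sum, degree_eq_sum]
  exact Finset.sum_union_inter

lemma degree_insert {F : Finset E} {e : E} (h : e ∉ F) (v : V) :
    degree ends (insert e F) v = econ ends e v + degree ends F v := by
  rw [degree_eq_sum, degree_eq_sum]
  exact Finset.sum_insert h

lemma degree_erase_add {F : Finset E} {e : E} (h : e ∈ F) (v : V) :
    econ ends e v + degree ends (F.erase e) v = degree ends F v := by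
  rw [degree_eq_sum, degree_eq_sum]
  exact Finset.add_sum_erase F (fun e => econ ends e v) h

/-- per-edge degree sum is 2 -/
lemma sum_econ (e : E) : ∑ v : V, econ ends e v = 2 := by
  simp only [econ]
  induction ends e using Sym2.inductionOn with
  | _ a b =>
    rcases eq_or_ne a b with rfl | hab
    · rw [Finset.sum_congr rfl (g := fun v => if v = a then 2 else 0)]
      · simp
      · intro v _
        by_cases hv : v = a
        · subst hv; rw [if_pos rfl, if_pos]; rfl
        · rw [if_neg, if_neg, if_neg hv]
          · simp only [Sym2.mem_iff]; tauto
          · unfold Sym2.diag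
            rw [Sym2.eq_iff]; tauto
    · rw [Finset.sum_congr rfl (g := fun v => if v = a ∨ v = b then 1 else 0)]
      · have hf : (Finset.univ.filter fun v : V => v = a ∨ v = b) = {a, b} := by
          ext v; simp
        rw [Finset.sum_ite, Finset.sum_const, Finset.sum_const_zero, hf,
          Finset.card_insert_of_notMem (by simp [hab]), Finset.card_singleton]
        simp
      · intro v _
        rw [if_neg]
        · by_cases hv : v = a ∨ v = b
          · rw [if_pos, if_pos hv]
            rw [Sym2.mem_iff]; exact hv
          · rw [if_neg, if_neg hv]
            rw [Sym2.mem_iff]; exact hv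
        · unfold Sym2.diag
          rw [Sym2.eq_iff]
          rintro (⟨rfl, rfl⟩ | ⟨rfl, rfl⟩) <;> exact hab rfl

lemma handshake (F : Finset E) : ∑ v : V, degree ends F v = 2 * F.card := by
  simp only [degree_eq_sum]
  rw [Finset.sum_comm]
  rw [Finset.sum_congr rfl (fun e _ => sum_econ e)]
  simp [mul_comm]

/- ## Reach lemmas -/

lemma Reach.symm {F : Finset E} {a b : V} (h : Reach ends F a b) : Reach ends F b a := by
  induction h with
  | refl => exact Relation.ReflTransGen.refl
  | tail _ step ih =>
    obtain ⟨e, he, hends⟩ := step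
    exact Relation.ReflTransGen.head ⟨e, he, by rw [hends, Sym2.eq_swap]⟩ ih

lemma Reach.trans {F : Finset E} {a b c : V} (h : Reach ends F a b) (h' : Reach ends F b c) :
    Reach ends F a c := Relation.ReflTransGen.trans h h'

lemma Reach.mono {F G : Finset E} (hFG : F ⊆ G) {a b : V} (h : Reach ends F a b) :
    Reach ends G a b := by
  refine Relation.ReflTransGen.mono ?_ _ _ h
  rintro u w ⟨e, he, hends⟩
  exact ⟨e, hFG he, hends⟩

lemma reach_empty {a b : V} (h : Reach ends (∅ : Finset E) a b) : a = b := by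
  induction h with
  | refl => rfl
  | tail _ step ih => obtain ⟨e, he, _⟩ := step; exact absurd he (by simp)

/-- splitting a reach at the first occurrence of an edge of `G` -/
lemma splitReach {F G : Finset E} {v t : V} (h : Reach ends F v t) :
    Reach ends (F \ G) v t ∨
    ∃ w g, Reach ends (F \ G) v w ∧ g ∈ F ∧ g ∈ G ∧ w ∈ ends g ∧
      (w = v ∨ ∃ f ∈ F \ G, w ∈ ends f) := by
  induction h using Relation.ReflTransGen.head_induction_on with
  | refl => exact Or.inl Relation.ReflTransGen.refl
  | head step h' ih =>
    rename_i u c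
    obtain ⟨e, he, hends⟩ := step
    by_cases heG : e ∈ G
    · refine Or.inr ⟨u, e, Relation.ReflTransGen.refl, he, heG, ?_, Or.inl rfl⟩
      rw [hends]; exact Sym2.mem_mk_left u c
    · have hstep : Reach ends (F \ G) u c :=
        Relation.ReflTransGen.single ⟨e, Finset.mem_sdiff.2 ⟨he, heG⟩, hends⟩
      rcases ih with hl | ⟨w, g, hr, hgF, hgG, hwg, hcase⟩
      · exact Or.inl (hstep.trans hl)
      · refine Or.inr ⟨w, g, hstep.trans hr, hgF, hgG, hwg, ?_⟩
        rcases hcase with rfl | hf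
        · exact Or.inr ⟨e, Finset.mem_sdiff.2 ⟨he, heG⟩, by rw [hends]; exact Sym2.mem_mk_right u w⟩
        · exact Or.inr hf

/-- if `u` can reach `v` in `F` but not avoiding `e`, the reach crosses `e` -/
lemma crossLemma {F : Finset E} {e : E} {u v : V} (h : Reach ends F u v)
    (hne : ¬ Reach ends (F.erase e) u v) :
    ∃ p q, ends e = s(p, q) ∧ Reach ends (F.erase e) u p ∧ Reach ends (F.erase e) q v := by
  induction h using Relation.ReflTransGen.head_induction_on with
  | refl => exact absurd Relation.ReflTransGen.refl hne
  | head step h' ih =>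
    rename_i a c
    obtain ⟨f, hf, hends⟩ := step
    by_cases hfe : f = e
    · subst hfe
      by_cases hcv : Reach ends (F.erase f) c v
      · exact ⟨a, c, hends, Relation.ReflTransGen.refl, hcv⟩
      · obtain ⟨p, q, hpq, hup, hqv⟩ := ih hcv
        rw [hends] at hpq
        rw [Sym2.eq_iff] at hpq
        rcases hpq with ⟨rfl, rfl⟩ | ⟨rfl, rfl⟩
        · exact absurd hqv hcv
        · exact absurd (hqv : Reach ends (F.erase f) a v)
            (fun hh => hne hh)
    · have hstep : Reach ends (F.erase e) a c :=
        Relation.ReflTransGen.single ⟨f, Finset.mem_erase.2 ⟨hfe, hf⟩, hends⟩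
      by_cases hcv : Reach ends (F.erase e) c v
      · exact absurd (hstep.trans hcv) hne
      · obtain ⟨p, q, hpq, hup, hqv⟩ := ih hcv
        exact ⟨p, q, hpq, hstep.trans hup, hqv⟩

/- ## Component machinery -/

variable (ends)

/-- edges of the reachability component of `a` in `F` -/
def comp (F : Finset E) (a : V) : Finset E :=
  F.filter fun e => ∃ w ∈ ends e, Reach ends F a w

variable {ends}

lemma comp_subset {F : Finset E} {a : V} : comp ends F a ⊆ F := Finset.filter_subset _ _

lemma reach_other_end {F : Finset E} {a w w' : V} {e : E} (he : e ∈ F)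
    (hw : Reach ends F a w) (hw' : w' ∈ ends e) (hwe : w ∈ ends e) : Reach ends F a w' := by
  obtain ⟨z, hz⟩ := Sym2.mem_iff_exists.1 hwe
  rw [hz, Sym2.mem_iff] at hw'
  rcases hw' with rfl | rfl
  · exact hw
  · exact hw.tail ⟨e, he, hz⟩

lemma mem_comp_iff {F : Finset E} {a : V} {e : E} :
    e ∈ comp ends F a ↔ e ∈ F ∧ ∃ w ∈ ends e, Reach ends F a w := by
  simp [comp]

lemma comp_ends_reach {F : Finset E} {a w : V} {e : E} (he : e ∈ comp ends F a)
    (hw : w ∈ ends e) : Reach ends F a w := by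
  obtain ⟨heF, w', hw', hr⟩ := mem_comp_iff.1 he
  exact reach_other_end heF hr hw hw'

lemma degree_comp_of_reach {F : Finset E} {a v : V} (h : Reach ends F a v) :
    degree ends (comp ends F a) v = degree ends F v := by
  have hsub : comp ends F a ⊆ F := comp_subset
  rw [← degree_sdiff_add hsub v]
  have : degree ends (F \ comp ends F a) v = 0 := by
    rw [degree_eq_sum]
    apply Finset.sum_eq_zero
    intro e he
    rw [Finset.mem_sdiff] at he
    apply econ_eq_zero
    intro hv
    exact he.2 (mem_comp_iff.2 ⟨he.1, v, hv, h⟩)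
  omega

lemma degree_comp_of_not_reach {F : Finset E} {a v : V} (h : ¬ Reach ends F a v) :
    degree ends (comp ends F a) v = 0 := by
  rw [degree_eq_sum]
  apply Finset.sum_eq_zero
  intro e he
  apply econ_eq_zero
  intro hv
  exact h (comp_ends_reach he hv)

lemma reach_comp {F : Finset E} {a u : V} (h : Reach ends F a u) :
    Reach ends (comp ends F a) a u := by
  induction h with
  | refl => exact Relation.ReflTransGen.refl
  | tail hab step ih =>
    rename_i b c
    obtain ⟨e, he, hends⟩ := step
    refine ih.tail ⟨e, mem_comp_iff.2 ⟨he, b, by rw [hends]; exact Sym2.mem_mk_left b c, hab⟩, hends⟩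

/-- a vertex of odd degree has a distinct reachable partner of odd degree -/
lemma oddPair {F : Finset E} {a : V} (ha : Odd (degree ends F a)) :
    ∃ b, b ≠ a ∧ Reach ends F a b ∧ Odd (degree ends F b) := by
  by_contra hcon
  push_neg at hcon
  have heven : ∀ v, v ≠ a → Even (degree ends (comp ends F a) v) := by
    intro v hv
    by_cases hr : Reach ends F a v
    · rw [degree_comp_of_reach hr]
      rcases Nat.even_or_odd (degree ends F v) with h | h
      · exact h
      · exact absurd h (hcon v hv hr)
    · rw [degree_comp_of_not_reach hr]; exact Even.zero
  have hsum : Even (∑ v : V, degree ends (comp ends F a) v) := by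
    rw [handshake]; exact even_two_mul _
  rw [← Finset.sum_erase_add _ _ (Finset.mem_univ a)] at hsum
  have h1 : Even (∑ v ∈ Finset.univ.erase a, degree ends (comp ends F a) v) :=
    Finset.even_sum _ fun v hv => heven v (Finset.ne_of_mem_erase hv)
  have h2 : Odd (degree ends (comp ends F a) a) := by
    rw [degree_comp_of_reach Relation.ReflTransGen.refl]; exact ha
  rw [Nat.even_add] at hsum
  exact (Nat.not_even_iff_odd.2 h2) (hsum.1 h1)

/-- a nonempty subgraph in which every support vertex has degree 2 contains a circuit -/
lemma circuitComp {F : Finset E} (hne : F.Nonempty)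
    (h2 : ∀ v ∈ support ends F, degree ends F v = 2) :
    ∃ K ⊆ F, IsCircuit ends K := by
  obtain ⟨e₀, he₀⟩ := hne
  obtain ⟨a, b, hab⟩ : ∃ a b, ends e₀ = s(a, b) := by
    induction ends e₀ using Sym2.inductionOn with
    | _ a b => exact ⟨a, b, rfl⟩
  have haF : a ∈ ends e₀ := by rw [hab]; exact Sym2.mem_mk_left a b
  refine ⟨comp ends F a, comp_subset, ?_, ?_, ?_⟩
  · exact ⟨e₀, mem_comp_iff.2 ⟨he₀, a, haF, Relation.ReflTransGen.refl⟩⟩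
  · intro u hu w hw
    rw [mem_support_iff] at hu hw
    obtain ⟨eu, heu, hueu⟩ := hu
    obtain ⟨ew, hew, hwew⟩ := hw
    have hau : Reach ends F a u := comp_ends_reach heu hueu
    have haw : Reach ends F a w := comp_ends_reach hew hwew
    exact ((reach_comp hau).symm).trans (reach_comp haw)
  · intro v hv
    rw [mem_support_iff] at hv
    obtain ⟨ev, hev, hvev⟩ := hv
    have hr : Reach ends F a v := comp_ends_reach hev hvev
    rw [degree_comp_of_reach hr]
    exact h2 v (mem_support_iff.2 ⟨ev, comp_subset hev, hvev⟩)

/- ## Walks -/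

variable (ends)

inductive Walk (F : Finset E) : V → V → List V → List E → Prop
  | nil (a : V) : Walk F a a [a] []
  | cons {a b c : V} {vs : List V} {es : List E} {e : E} :
      e ∈ F → ends e = s(a, b) → Walk F b c vs es → Walk F a c (a :: vs) (e :: es)

variable {ends}

lemma Walk.head_eq {F : Finset E} {a c : V} {vs : List V} {es : List E}
    (h : Walk ends F a c vs es) : ∃ vs', vs = a :: vs' := by
  cases h with
  | nil => exact ⟨[], rfl⟩
  | cons _ _ _ => exact ⟨_, rfl⟩

lemma Walk.last_mem {F : Finset E} {a c : V} {vs : List V} {es : List E}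
    (h : Walk ends F a c vs es) : c ∈ vs := by
  induction h with
  | nil => simp
  | cons _ _ _ ih => simp [ih]

lemma Walk.edges_mem {F : Finset E} {a c : V} {vs : List V} {es : List E}
    (h : Walk ends F a c vs es) : ∀ e ∈ es, e ∈ F := by
  induction h with
  | nil => simp
  | cons he _ _ ih => intro f hf; rcases List.mem_cons.1 hf with rfl | hf; exact he; exact ih f hf

lemma Walk.ends_mem_vs {F : Finset E} {a c : V} {vs : List V} {es : List E}
    (h : Walk ends F a c vs es) : ∀ e ∈ es, ∀ v ∈ ends e, v ∈ vs := by
  induction h with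
  | nil => simp
  | cons he hends hw ih =>
    intro f hf v hv
    rcases List.mem_cons.1 hf with rfl | hf
    · rw [hends, Sym2.mem_iff] at hv
      rcases hv with rfl | rfl
      · exact List.mem_cons_self
      · obtain ⟨vs', rfl⟩ := hw.head_eq
        exact List.mem_cons_of_mem _ (List.mem_cons_self)
    · exact List.mem_cons_of_mem _ (ih f hf v hv)

lemma Walk.reach {F : Finset E} {a c : V} {vs : List V} {es : List E}
    (h : Walk ends F a c vs es) : Reach ends F a c := by
  induction h with
  | nil => exact Relation.ReflTransGen.refl
  | cons he hends _ ih => exact Relation.ReflTransGen.head ⟨_, he, hends⟩ ih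

lemma Walk.reach_all {F : Finset E} {a c : V} {vs : List V} {es : List E}
    (h : Walk ends F a c vs es) : ∀ v ∈ vs, Reach ends es.toFinset a v := by
  induction h with
  | nil => intro v hv; rw [List.mem_singleton] at hv; subst hv; exact Relation.ReflTransGen.refl
  | cons he hends hw ih =>
    rename_i a' b' c' vs' es' e'
    intro v hv
    rcases List.mem_cons.1 hv with rfl | hv
    · exact Relation.ReflTransGen.refl
    · have step : Reach ends (e' :: es').toFinset a' b' :=
        Relation.ReflTransGen.single ⟨e', by simp, hends⟩
      exact step.trans ((ih v hv).mono (by intro f hf; simp at hf ⊢; exact Or.inr hf))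

lemma reach_walk {F : Finset E} {a c : V} (h : Reach ends F a c) :
    ∃ vs es, Walk ends F a c vs es := by
  induction h using Relation.ReflTransGen.head_induction_on with
  | refl => exact ⟨[c], [], Walk.nil c⟩
  | head step _ ih =>
    obtain ⟨e, he, hends⟩ := step
    obtain ⟨vs, es, hw⟩ := ih
    exact ⟨_, _, Walk.cons he hends hw⟩

lemma walk_append {F : Finset E} {a b c : V} {vs1 vs2 : List V} {es1 es2 : List E}
    (h1 : Walk ends F a b vs1 es1) (h2 : Walk ends F b c (b :: vs2) es2) :
    Walk ends F a c (vs1 ++ vs2) (es1 ++ es2) := by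
  induction h1 with
  | nil => simpa using h2
  | cons he hends hw ih => exact Walk.cons he hends (ih h2)

lemma walk_split {F : Finset E} {a c w : V} {vs : List V} {es : List E}
    (h : Walk ends F a c vs es) :
    ∀ l₁ l₂, vs = l₁ ++ w :: l₂ →
      ∃ es₁ es₂, es = es₁ ++ es₂ ∧ Walk ends F a w (l₁ ++ [w]) es₁ ∧
        Walk ends F w c (w :: l₂) es₂ := by
  induction h with
  | nil =>
    rename_i a'
    intro l₁ l₂ hsplit
    cases l₁ with
    | nil =>
      simp only [List.nil_append, List.cons.injEq] at hsplit
      obtain ⟨rfl, rfl⟩ := hsplit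
      exact ⟨[], [], rfl, Walk.nil a', Walk.nil a'⟩
    | cons x xs =>
      exfalso
      simpa using congrArg List.length hsplit
  | cons he hends hw ih =>
    rename_i a' b' c' vs' es' e'
    intro l₁ l₂ hsplit
    cases l₁ with
    | nil =>
      simp at hsplit
      obtain ⟨rfl, rfl⟩ := hsplit
      exact ⟨[], e' :: es', rfl, Walk.nil a', Walk.cons he hends hw⟩
    | cons x xs =>
      rw [List.cons_append] at hsplit
      injection hsplit with h1 htail
      subst h1
      obtain ⟨es₁, es₂, rfl, hw1, hw2⟩ := ih xs l₂ htail
      exact ⟨e' :: es₁, es₂, rfl, Walk.cons he hends hw1, hw2⟩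

lemma exists_dup {α : Type} {vs : List α} (hnd : ¬ vs.Nodup) :
    ∃ w l1 l2 l3, vs = l1 ++ w :: (l2 ++ w :: l3) := by
  induction vs with
  | nil => simp at hnd
  | cons x xs ih =>
    by_cases hx : x ∈ xs
    · obtain ⟨l2, l3, hxs⟩ := List.append_of_mem hx
      exact ⟨x, [], l2, l3, by simp [hxs]⟩
    · have hxs' : ¬ xs.Nodup := fun hh => hnd (List.nodup_cons.2 ⟨hx, hh⟩)
      obtain ⟨w, l1, l2, l3, hxs⟩ := ih hxs'
      exact ⟨w, x :: l1, l2, l3, by simp [hxs]⟩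

/-- every walk can be shortened to one with no repeated vertices -/
lemma walk_nodup {F : Finset E} {a c : V} {vs : List V} {es : List E}
    (h : Walk ends F a c vs es) :
    ∃ vs' es', Walk ends F a c vs' es' ∧ vs'.Nodup := by
  by_cases hnd : vs.Nodup
  · exact ⟨vs, es, h, hnd⟩
  · obtain ⟨w, l1, l2, l3, hvs⟩ := exists_dup hnd
    obtain ⟨es₁, es₂, rfl, hw1, hw2⟩ := walk_split h l1 (l2 ++ w :: l3) hvs
    obtain ⟨es₃, es₄, rfl, hw3, hw4⟩ := walk_split hw2 (w :: l2) l3 rfl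
    have hglue := walk_append hw1 hw4
    have hlen : ((l1 ++ [w]) ++ l3).length < vs.length := by
      rw [hvs]; simp
    have := walk_nodup hglue
    exact this
termination_by vs.length
decreasing_by
  exact hlen

/-- degrees of the edge set of a walk with no repeated vertices -/
lemma walk_degree {F : Finset E} {p q : V} {vs : List V} {es : List E}
    (h : Walk ends F p q vs es) (hnd : vs.Nodup) :
    (degree ends es.toFinset p = if p = q then 0 else 1) ∧
    (degree ends es.toFinset q = if p = q then 0 else 1) ∧
    (∀ v ∈ vs, v ≠ p → v ≠ q → degree ends es.toFinset v = 2) ∧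
    (∀ v, v ∉ vs → degree ends es.toFinset v = 0) := by
  induction h with
  | nil =>
    refine ⟨by simp [degree_eq_sum], by simp [degree_eq_sum], ?_, ?_⟩
    · intro v hv hv1 _
      rw [List.mem_singleton] at hv; exact absurd hv hv1
    · intro v _; simp [degree_eq_sum]
  | cons he hends hw ih =>
    rename_i a b c vs' es' e
    rw [List.nodup_cons] at hnd
    obtain ⟨ha, hnd'⟩ := hnd
    obtain ⟨ihp, ihq, ihmid, ihout⟩ := ih hnd'
    obtain ⟨vs'', rfl⟩ := hw.head_eq
    have hb : b ∈ b :: vs'' := List.mem_cons_self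
    have hab : a ≠ b := fun hh => ha (hh ▸ hb)
    have hac : a ≠ c := fun hh => ha (hh ▸ hw.last_mem)
    have henotin : e ∉ es' := by
      intro hin
      exact ha (hw.ends_mem_vs e hin a (by rw [hends]; exact Sym2.mem_mk_left a b))
    have hdeg : ∀ v, degree ends (e :: es').toFinset v = econ ends e v + degree ends es'.toFinset v := by
      intro v
      rw [List.toFinset_cons, degree_insert (by simp [henotin])]
    have hca : econ ends e a = 1 := by
      unfold econ
      rw [if_neg, if_pos (by rw [hends]; exact Sym2.mem_mk_left a b)]
      rw [hends]; unfold Sym2.diag; rw [Sym2.eq_iff]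
      rintro (⟨-, h2⟩ | ⟨-, h2⟩) <;> exact hab h2.symm
    have hcb : econ ends e b = 1 := by
      unfold econ
      rw [if_neg, if_pos (by rw [hends]; exact Sym2.mem_mk_right a b)]
      rw [hends]; unfold Sym2.diag; rw [Sym2.eq_iff]
      rintro (⟨h2, -⟩ | ⟨h2, -⟩) <;> exact hab h2
    have hcother : ∀ v, v ≠ a → v ≠ b → econ ends e v = 0 := by
      intro v hva hvb
      apply econ_eq_zero
      rw [hends, Sym2.mem_iff]
      tauto
    have houtvs : ∀ v, v ∉ a :: b :: vs'' → degree ends (e :: es').toFinset v = 0 := by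
      intro v hv
      rw [List.mem_cons, not_or] at hv
      rw [hdeg, hcother v hv.1 (fun hh => hv.2 (hh ▸ hb)), ihout v hv.2]
    refine ⟨?_, ?_, ?_, houtvs⟩
    · rw [if_neg hac, hdeg, hca, ihout a ha]
    · rw [if_neg hac, hdeg]
      by_cases hbc : b = c
      · subst hbc
        have : es' = [] := by
          cases hw with
          | nil => rfl
          | cons he' hends' hw' =>
            exfalso
            rename_i b2 vs2 es2 e2
            obtain ⟨vs3, rfl⟩ := hw'.head_eq
            exact (List.nodup_cons.1 hnd').1 hw'.last_mem
        subst this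
        simp only [List.toFinset_nil]
        rw [hcb]
        simp [degree_eq_sum]
      · rw [hcother c (Ne.symm hac) (fun hh => hbc hh.symm), ihq, if_neg hbc]
    · intro v hv hva hvc
      rcases List.mem_cons.1 hv with rfl | hv'
      · exact absurd rfl hva
      · by_cases hvb : v = b
        · subst hvb
          have hbc : v ≠ c := hvc
          rw [hdeg, hcb, ihp, if_neg hbc]
        · rw [hdeg, hcother v hva hvb, ihmid v hv' hvb hvc]

/-- first crossing into a vertex set -/
lemma firstHit {F : Finset E} {c a : V} {S : Finset V} (h : Reach ends F c a)
    (hc : c ∉ S) (ha : a ∈ S) :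
    ∃ wm w f, f ∈ F ∧ ends f = s(wm, w) ∧ wm ∉ S ∧ w ∈ S := by
  induction h using Relation.ReflTransGen.head_induction_on with
  | refl => exact absurd ha hc
  | head step h' ih =>
    rename_i u d
    obtain ⟨e, he, hends⟩ := step
    by_cases hd : d ∈ S
    · exact ⟨u, d, e, he, hends, hc, hd⟩
    · exact ih hd

/- ## Circuits and trees -/

lemma loop_singleton_circuit {e : E} {p : V} (h : ends e = Sym2.diag p) :
    IsCircuit ends {e} := by
  have hsupp : support ends {e} = {p} := by
    ext v
    simp only [mem_support_iff, Finset.mem_singleton]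
    constructor
    · rintro ⟨f, rfl, hv⟩
      rw [h] at hv; unfold Sym2.diag at hv; rw [Sym2.mem_iff] at hv; tauto
    · rintro rfl
      exact ⟨e, rfl, by rw [h]; unfold Sym2.diag; exact Sym2.mem_mk_left _ _⟩
  refine ⟨⟨e, Finset.mem_singleton_self e⟩, ?_, ?_⟩
  · intro u hu w hw
    rw [hsupp, Finset.mem_singleton] at hu hw
    subst hu; subst hw; exact Relation.ReflTransGen.refl
  · intro v hv
    rw [hsupp, Finset.mem_singleton] at hv; subst hv
    rw [degree_eq_sum, Finset.sum_singleton]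
    unfold econ
    rw [if_pos h]

/-- in an acyclic graph every edge is a bridge -/
lemma acyclic_bridge {T : Finset E} (hT : ∀ C ⊆ T, ¬ IsCircuit ends C)
    {e : E} (he : e ∈ T) {p q : V} (hends : ends e = s(p, q)) :
    ¬ Reach ends (T.erase e) p q := by
  intro hr
  by_cases hpq : p = q
  · subst hpq
    exact hT {e} (by simpa using he) (loop_singleton_circuit (by rw [hends]; rfl))
  · obtain ⟨vs0, es0, hw0⟩ := reach_walk hr
    obtain ⟨vs, es, hw, hnd⟩ := walk_nodup hw0
    obtain ⟨hdp, hdq, hdmid, hdout⟩ := walk_degree hw hnd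
    have hesub : es.toFinset ⊆ T.erase e := by
      intro f hf; rw [List.mem_toFinset] at hf; exact hw.edges_mem f hf
    have henotin : e ∉ es.toFinset := fun hh => (Finset.mem_erase.1 (hesub hh)).1 rfl
    set C : Finset E := insert e es.toFinset with hC
    have hdegC : ∀ v, degree ends C v = econ ends e v + degree ends es.toFinset v := by
      intro v; rw [hC, degree_insert henotin]
    have hCT : C ⊆ T := by
      intro f hf
      rw [hC, Finset.mem_insert] at hf
      rcases hf with rfl | hf
      · exact he
      · exact Finset.mem_of_mem_erase (hesub hf)
    apply hT C hCT
    have hvs : ∀ v ∈ vs, v = p ∨ v = q ∨ degree ends C v = 2 := by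
      intro v hv
      by_cases h1 : v = p
      · exact Or.inl h1
      by_cases h2 : v = q
      · exact Or.inr (Or.inl h2)
      refine Or.inr (Or.inr ?_)
      rw [hdegC, hdmid v hv h1 h2, econ_eq_zero (by rw [hends, Sym2.mem_iff]; tauto)]
    have hce : ∀ v, v ∈ ends e → econ ends e v = 1 := by
      intro v hv
      unfold econ
      rw [if_neg, if_pos hv]
      rw [hends]
      unfold Sym2.diag; rw [Sym2.eq_iff]
      rw [hends, Sym2.mem_iff] at hv
      rcases hv with rfl | rfl
      · rintro (⟨-, h2⟩ | ⟨-, h2⟩) <;> exact hpq h2.symm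
      · rintro (⟨h2, -⟩ | ⟨h2, -⟩) <;> exact hpq h2
    have hdegp : degree ends C p = 2 := by
      rw [hdegC, hce p (by rw [hends]; exact Sym2.mem_mk_left p q), hdp, if_neg hpq]
    have hdegq : degree ends C q = 2 := by
      rw [hdegC, hce q (by rw [hends]; exact Sym2.mem_mk_right p q), hdq, if_neg hpq]
    have hsupp : ∀ v ∈ support ends C, v ∈ vs := by
      intro v hv
      rw [mem_support_iff] at hv
      obtain ⟨f, hf, hvf⟩ := hv
      rw [hC, Finset.mem_insert] at hf
      rcases hf with rfl | hf
      · rw [hends, Sym2.mem_iff] at hvf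
        rcases hvf with rfl | rfl
        · obtain ⟨vs', rfl⟩ := hw.head_eq; exact List.mem_cons_self
        · exact hw.last_mem
      · exact hw.ends_mem_vs f (List.mem_toFinset.1 hf) v hvf
    refine ⟨⟨e, by rw [hC]; exact Finset.mem_insert_self _ _⟩, ?_, ?_⟩
    · intro u hu w hwv
      have hru : Reach ends C p u := (hw.reach_all u (hsupp u hu)).mono (by
        intro f hf; rw [hC]; exact Finset.mem_insert_of_mem hf)
      have hrw : Reach ends C p w := (hw.reach_all w (hsupp w hwv)).mono (by
        intro f hf; rw [hC]; exact Finset.mem_insert_of_mem hf)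
      exact hru.symm.trans hrw
    · intro v hv
      rcases hvs v (hsupp v hv) with rfl | rfl | h
      · exact hdegp
      · exact hdegq
      · exact h

/-- connecting sets in a tree can be intersected -/
lemma treeInt {T : Finset E} (hT : ∀ C ⊆ T, ¬ IsCircuit ends C) {u v : V} :
    ∀ (A : Finset E), A ⊆ T → ∀ {B : Finset E}, B ⊆ T →
      Reach ends A u v → Reach ends B u v → Reach ends (A ∩ B) u v := by
  intro A
  induction A using Finset.strongInduction with
  | _ A ih =>
    intro hAT B hBT hA hB
    by_cases hAB : (A \ B).Nonempty
    · obtain ⟨e, he⟩ := hAB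
      rw [Finset.mem_sdiff] at he
      by_cases hre : Reach ends (A.erase e) u v
      · have := ih (A.erase e) (Finset.erase_ssubset he.1) (fun f hf => hAT (Finset.mem_of_mem_erase hf)) hBT hre hB
        refine this.mono ?_
        intro f hf
        rw [Finset.mem_inter] at hf ⊢
        exact ⟨Finset.mem_of_mem_erase hf.1, hf.2⟩
      · obtain ⟨p, q, hpq, hup, hqv⟩ := crossLemma hA hre
        exfalso
        apply acyclic_bridge hT (hAT he.1) hpq
        have h1 : Reach ends (T.erase e) u p := hup.mono (by
          intro f hf; rw [Finset.mem_erase] at hf ⊢; exact ⟨hf.1, hAT hf.2⟩)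
        have h2 : Reach ends (T.erase e) q v := hqv.mono (by
          intro f hf; rw [Finset.mem_erase] at hf ⊢; exact ⟨hf.1, hAT hf.2⟩)
        have h3 : Reach ends (T.erase e) u v := hB.mono (by
          intro f hf; rw [Finset.mem_erase]; exact ⟨fun hh => he.2 (hh ▸ hf), hBT hf⟩)
        exact h1.symm.trans (h3.trans h2.symm)
    · rw [Finset.not_nonempty_iff_eq_empty, Finset.sdiff_eq_empty_iff_subset] at hAB
      rwa [Finset.inter_eq_left.2 hAB]

/-- a graph with maximum degree 2 cannot have three pairwise connected leaves -/
lemma threeLeaves {F : Finset E} (hdeg : ∀ v, degree ends F v ≤ 2) {a b c : V}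
    (hab : a ≠ b) (hca : c ≠ a) (hcb : c ≠ b)
    (hda : degree ends F a = 1) (hdb : degree ends F b = 1) (hdc : degree ends F c = 1)
    (hrab : Reach ends F a b) (hrca : Reach ends F c a) : False := by
  obtain ⟨vs0, es0, hw0⟩ := reach_walk hrab
  obtain ⟨vs, es, hw, hnd⟩ := walk_nodup hw0
  obtain ⟨hdp, hdq, hdmid, hdout⟩ := walk_degree hw hnd
  have hesub : es.toFinset ⊆ F := fun f hf => hw.edges_mem f (List.mem_toFinset.1 hf)
  have hcvs : c ∉ vs := by
    intro hc
    have := hdmid c hc hca hcb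
    have hle : degree ends es.toFinset c ≤ degree ends F c := degree_mono hesub c
    omega
  obtain ⟨wm, w, f, hfF, hfends, hwm, hwvs⟩ :=
    firstHit (S := vs.toFinset) hrca (by simpa using hcvs)
      (by simp; obtain ⟨vs', rfl⟩ := hw.head_eq; exact List.mem_cons_self)
  rw [List.mem_toFinset] at hwvs
  have hfnotin : f ∉ es.toFinset := by
    intro hf
    apply hwm
    rw [List.mem_toFinset]
    exact hw.ends_mem_vs f (List.mem_toFinset.1 hf) wm (by rw [hfends]; exact Sym2.mem_mk_left _ _)
  have hkey : econ ends f w + degree ends es.toFinset w ≤ degree ends F w := by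
    have : degree ends (insert f es.toFinset) w ≤ degree ends F w := by
      apply degree_mono
      intro g hg
      rw [Finset.mem_insert] at hg
      rcases hg with rfl | hg
      · exact hfF
      · exact hesub hg
    rwa [degree_insert hfnotin] at this
  have hw1 : 1 ≤ econ ends f w := one_le_econ (by rw [hfends]; exact Sym2.mem_mk_right _ _)
  by_cases h1 : w = a
  · rw [h1] at hkey hw1; rw [hdp, if_neg hab, hda] at hkey; omega
  by_cases h2 : w = b
  · rw [h2] at hkey hw1; rw [hdq, if_neg hab, hdb] at hkey; omega
  · have := hdmid w hwvs h1 h2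
    have := hdeg w
    omega

lemma econ_of_ne {e : E} {p q v : V} (h : ends e = s(p, q)) (hpq : p ≠ q)
    (hv : v ∈ ends e) : econ ends e v = 1 := by
  unfold econ
  rw [if_neg, if_pos hv]
  rw [h]
  unfold Sym2.diag; rw [Sym2.eq_iff]
  rintro (⟨rfl, h2⟩ | ⟨h2, rfl⟩)
  · exact hpq h2.symm
  · exact hpq h2

lemma econ_mem_of_eq_one {e : E} {v : V} (h : econ ends e v = 1) : v ∈ ends e := by
  unfold econ at h
  by_cases h1 : ends e = Sym2.diag v
  · rw [if_pos h1] at h; omega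
  · rw [if_neg h1] at h
    by_cases h2 : v ∈ ends e
    · exact h2
    · rw [if_neg h2] at h; omega

lemma circuit_degree_even {C : Finset E} (hC : IsCircuit ends C) (v : V) :
    Even (degree ends C v) := by
  by_cases hv : v ∈ support ends C
  · rw [hC.2.2 v hv]; exact even_two
  · rw [degree_eq_zero_of_not_mem_support hv]; exact Even.zero

lemma circuit_loop_support {C : Finset E} {e : E} {p : V} (hC : IsCircuit ends C)
    (he : e ∈ C) (h : ends e = Sym2.diag p) : support ends C = {p} := by
  have hp : p ∈ support ends C :=
    mem_support_iff.2 ⟨e, he, by rw [h]; unfold Sym2.diag; exact Sym2.mem_mk_left _ _⟩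
  have hdp : degree ends C p = 2 := hC.2.2 p hp
  ext u
  rw [Finset.mem_singleton]
  constructor
  · intro hu
    by_contra hup
    have hr : Reach ends C p u := hC.2.1 p hp u hu
    obtain ⟨wm, w, f, hfC, hfe, hwm, hwS⟩ :=
      firstHit (S := Finset.univ.erase p) hr (by simp)
        (Finset.mem_erase.2 ⟨hup, Finset.mem_univ u⟩)
    have hwmp : wm = p := by
      by_contra hc
      exact hwm (Finset.mem_erase.2 ⟨hc, Finset.mem_univ wm⟩)
    rw [hwmp] at hfe
    have hwp : w ≠ p := (Finset.mem_erase.1 hwS).1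
    have hfne : f ≠ e := by
      intro hfeq
      rw [hfeq, h] at hfe
      unfold Sym2.diag at hfe
      rw [Sym2.eq_iff] at hfe
      rcases hfe with ⟨-, h2⟩ | ⟨h2, -⟩ <;> exact hwp h2.symm
    have h3 : econ ends e p + degree ends (C.erase e) p = degree ends C p :=
      degree_erase_add he p
    have h4 : econ ends e p = 2 := by unfold econ; rw [if_pos h]
    have h5 : 1 ≤ degree ends (C.erase e) p :=
      one_le_degree (Finset.mem_erase.2 ⟨hfne, hfC⟩)
        (by rw [hfe]; exact Sym2.mem_mk_left _ _)
    omega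
  · rintro rfl; exact hp

/-- removing a non-loop edge from a circuit keeps its support connected -/
lemma circuit_minus_edge_reach {C : Finset E} {e : E} {p q : V} (hC : IsCircuit ends C)
    (he : e ∈ C) (hends : ends e = s(p, q)) (hpq : p ≠ q) :
    ∀ u ∈ support ends C, ∀ v ∈ support ends C, Reach ends (C.erase e) u v := by
  have hp : p ∈ support ends C :=
    mem_support_iff.2 ⟨e, he, by rw [hends]; exact Sym2.mem_mk_left _ _⟩
  have hoddp : Odd (degree ends (C.erase e) p) := by
    have h1 := degree_erase_add (ends := ends) he p
    rw [hC.2.2 p hp, econ_of_ne hends hpq (by rw [hends]; exact Sym2.mem_mk_left _ _)] at h1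
    rw [Nat.odd_iff]
    omega
  have hreachpq : Reach ends (C.erase e) p q := by
    obtain ⟨b, hbp, hbr, hbodd⟩ := oddPair hoddp
    have hb : b = q := by
      have h1 := degree_erase_add (ends := ends) he b
      have h2 : Even (degree ends C b) := circuit_degree_even hC b
      have h3 : econ ends e b = 1 := by
        have h4 := econ_le_two (ends := ends) e b
        rw [Nat.odd_iff] at hbodd
        rw [Nat.even_iff] at h2
        omega
      have := econ_mem_of_eq_one h3
      rw [hends, Sym2.mem_iff] at this
      rcases this with rfl | rfl
      · exact absurd rfl hbp
      · rfl
    exact hb ▸ hbr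
  have key : ∀ u ∈ support ends C, Reach ends (C.erase e) u p := by
    intro u hu
    have hr : Reach ends C u p := hC.2.1 u hu p hp
    have hsd : C \ {e} = C.erase e := by rw [Finset.sdiff_singleton_eq_erase]
    rcases splitReach (G := {e}) hr with hl | ⟨w, g, hrw, hgC, hgE, hwg, -⟩
    · rwa [hsd] at hl
    · rw [Finset.mem_singleton] at hgE
      subst hgE
      rw [hsd] at hrw
      rw [hends, Sym2.mem_iff] at hwg
      rcases hwg with rfl | rfl
      · exact hrw
      · exact hrw.trans hreachpq.symm
  intro u hu v hv
  exact (key u hu).trans (key v hv).symm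

/-- tree-path lemma: any two common support vertices of the two circuits are
joined inside the intersection -/
lemma mtl {T Cx Cy : Finset E} {x y : E} (hT : ∀ C ⊆ T, ¬ IsCircuit ends C)
    (hCx : IsCircuit ends Cx) (hCy : IsCircuit ends Cy) (hx : x ∈ Cx) (hy : y ∈ Cy)
    (hCxT : Cx.erase x ⊆ T) (hCyT : Cy.erase y ⊆ T)
    {u v : V} (hu : u ∈ support ends Cx) (hu' : u ∈ support ends Cy)
    (hv : v ∈ support ends Cx) (hv' : v ∈ support ends Cy) (huv : u ≠ v) :
    Reach ends (Cx.erase x ∩ Cy.erase y) u v := by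
  obtain ⟨p, q, hpq⟩ : ∃ p q, ends x = s(p, q) := by
    induction ends x using Sym2.inductionOn with
    | _ a b => exact ⟨a, b, rfl⟩
  have hpqne : p ≠ q := by
    rintro rfl
    have := circuit_loop_support hCx hx (by rw [hpq]; rfl)
    rw [this, Finset.mem_singleton] at hu hv
    exact huv (hu.trans hv.symm)
  obtain ⟨p', q', hpq'⟩ : ∃ p q, ends y = s(p, q) := by
    induction ends y using Sym2.inductionOn with
    | _ a b => exact ⟨a, b, rfl⟩
  have hpqne' : p' ≠ q' := by
    rintro rfl
    have := circuit_loop_support hCy hy (by rw [hpq']; rfl)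
    rw [this, Finset.mem_singleton] at hu' hv'
    exact huv (hu'.trans hv'.symm)
  have h1 : Reach ends (Cx.erase x) u v := circuit_minus_edge_reach hCx hx hpq hpqne u hu v hv
  have h2 : Reach ends (Cy.erase y) u v := circuit_minus_edge_reach hCy hy hpq' hpqne' u hu' v hv'
  exact treeInt hT (Cx.erase x) hCxT hCyT h1 h2

lemma first_edge {F : Finset E} {v u : V} (h : Reach ends F v u) (hne : v ≠ u) :
    ∃ g ∈ F, v ∈ ends g := by
  induction h using Relation.ReflTransGen.head_induction_on with
  | refl => exact absurd rfl hne
  | head step h' ih =>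
    obtain ⟨e, he, hends⟩ := step
    exact ⟨e, he, by rw [hends]; exact Sym2.mem_mk_left _ _⟩

lemma exists_ends_rep (e : E) : ∃ p q, ends e = s(p, q) := by
  induction ends e using Sym2.inductionOn with
  | _ a b => exact ⟨a, b, rfl⟩

end Aux

/- AUX END -/

/-- For distinct negative edges `x, y`, the symmetric difference of
their fundamental circuits is a balanced circuit, a short barbell, or a disjoint
union of two unbalanced circuits. -/
theorem statement13 {V E : Type} [Fintype V] [Fintype E] [DecidableEq V] [DecidableEq E]
    (ends : E → Sym2 V) (sgn : E → Bool)
    (hT : IsSpanningTree ends (Finset.univ.filter fun e => sgn e = false))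
    (Cx : E → Finset E)
    (hCx : ∀ x : E, sgn x = true →
      IsCircuit ends (Cx x) ∧
      Cx x ⊆ insert x (Finset.univ.filter fun e => sgn e = false) ∧ x ∈ Cx x)
    (x y : E) (hx : sgn x = true) (hy : sgn y = true) (hxy : x ≠ y) :
    IsBalancedCircuit ends sgn ((Cx x ∪ Cx y) \ (Cx x ∩ Cx y)) ∨
    IsShortBarbell ends sgn ((Cx x ∪ Cx y) \ (Cx x ∩ Cx y)) ∨
    (∃ C₁ C₂ : Finset E, Disjoint C₁ C₂ ∧
      (Cx x ∪ Cx y) \ (Cx x ∩ Cx y) = C₁ ∪ C₂ ∧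
      Disjoint (support ends C₁) (support ends C₂) ∧
      IsUnbalancedCircuit ends sgn C₁ ∧ IsUnbalancedCircuit ends sgn C₂) := by
  classical
  obtain ⟨hCircX, hsubX, hmemX⟩ := hCx x hx
  obtain ⟨hCircY, hsubY, hmemY⟩ := hCx y hy
  set T : Finset E := Finset.univ.filter (fun e => sgn e = false) with hTdef
  set CA : Finset E := Cx x with hCA
  set CB : Finset E := Cx y with hCB
  have hacyc : ∀ C ⊆ T, ¬ IsCircuit ends C := hT.2
  have hmemT : ∀ e : E, e ∈ T ↔ sgn e = false := by intro e; simp [hTdef]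
  have hxT : x ∉ T := by rw [hmemT]; simp [hx]
  have hyT : y ∉ T := by rw [hmemT]; simp [hy]
  have hxCB : x ∉ CB := by
    intro h
    rcases Finset.mem_insert.1 (hsubY h) with h' | h'
    · exact hxy h'
    · exact hxT h'
  have hyCA : y ∉ CA := by
    intro h
    rcases Finset.mem_insert.1 (hsubX h) with h' | h'
    · exact hxy h'.symm
    · exact hyT h'
  have hAT : ∀ e ∈ CA, e ≠ x → e ∈ T := by
    intro e he hne
    rcases Finset.mem_insert.1 (hsubX he) with h' | h'
    · exact absurd h' hne
    · exact h'
  have hBT : ∀ e ∈ CB, e ≠ y → e ∈ T := by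
    intro e he hne
    rcases Finset.mem_insert.1 (hsubY he) with h' | h'
    · exact absurd h' hne
    · exact h'
  have hAeT : CA.erase x ⊆ T := fun e he =>
    hAT e (Finset.mem_of_mem_erase he) (Finset.mem_erase.1 he).1
  have hBeT : CB.erase y ⊆ T := fun e he =>
    hBT e (Finset.mem_of_mem_erase he) (Finset.mem_erase.1 he).1
  set Q : Finset E := CA ∩ CB with hQdef
  have hQer : Q = CA.erase x ∩ CB.erase y := by
    ext e
    rw [hQdef, Finset.mem_inter, Finset.mem_inter, Finset.mem_erase, Finset.mem_erase]
    constructor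
    · rintro ⟨h1, h2⟩
      exact ⟨⟨fun hh => hxCB (hh ▸ h2), h1⟩, ⟨fun hh => hyCA (hh ▸ h1), h2⟩⟩
    · rintro ⟨h1, h2⟩; exact ⟨h1.2, h2.2⟩
  have hQT : Q ⊆ T := by
    rw [hQer]; exact fun e he => hAeT (Finset.mem_inter.1 he).1
  set D : Finset E := (CA ∪ CB) \ Q with hDdef
  have hxQ : x ∉ Q := fun h => hxCB (Finset.mem_inter.1 h).2
  have hyQ : y ∉ Q := fun h => hyCA (Finset.mem_inter.1 h).1
  have hxD : x ∈ D := Finset.mem_sdiff.2 ⟨Finset.mem_union_left _ hmemX, hxQ⟩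
  have hyD : y ∈ D := Finset.mem_sdiff.2 ⟨Finset.mem_union_right _ hmemY, hyQ⟩
  have hnegD : negEdges sgn D = {x, y} := by
    ext e
    unfold negEdges
    rw [Finset.mem_filter, Finset.mem_insert, Finset.mem_singleton]
    constructor
    · rintro ⟨he, hsgn⟩
      rw [hDdef, Finset.mem_sdiff, Finset.mem_union] at he
      rcases he.1 with h' | h'
      · left
        by_contra hne
        exact absurd (hmemT e |>.1 (hAT e h' hne)) (by simp [hsgn])
      · right
        by_contra hne
        exact absurd (hmemT e |>.1 (hBT e h' hne)) (by simp [hsgn])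
    · rintro (rfl | rfl)
      · exact ⟨hxD, hx⟩
      · exact ⟨hyD, hy⟩
  have hnegA : negEdges sgn CA = {x} := by
    ext e
    unfold negEdges
    rw [Finset.mem_filter, Finset.mem_singleton]
    constructor
    · rintro ⟨he, hsgn⟩
      by_contra hne
      exact absurd (hmemT e |>.1 (hAT e he hne)) (by simp [hsgn])
    · rintro rfl; exact ⟨hmemX, hx⟩
  have hnegB : negEdges sgn CB = {y} := by
    ext e
    unfold negEdges
    rw [Finset.mem_filter, Finset.mem_singleton]
    constructor
    · rintro ⟨he, hsgn⟩
      by_contra hne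
      exact absurd (hmemT e |>.1 (hBT e he hne)) (by simp [hsgn])
    · rintro rfl; exact ⟨hmemY, hy⟩
  have hunbalA : IsUnbalancedCircuit ends sgn CA := ⟨hCircX, by rw [hnegA]; simp⟩
  have hunbalB : IsUnbalancedCircuit ends sgn CB := ⟨hCircY, by rw [hnegB]; simp⟩
  by_cases hQe : Q = ∅
  · -- the two circuits share no edge
    have hdisj : Disjoint CA CB := Finset.disjoint_iff_inter_eq_empty.2 hQe
    have hDeq : (CA ∪ CB) \ (CA ∩ CB) = CA ∪ CB := by
      rw [← hQdef, hQe, Finset.sdiff_empty]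
    by_cases hS : support ends CA ∩ support ends CB = ∅
    · right; right
      exact ⟨CA, CB, hdisj, hDeq.symm ▸ rfl, Finset.disjoint_iff_inter_eq_empty.2 hS,
        hunbalA, hunbalB⟩
    · obtain ⟨v, hv⟩ := Finset.nonempty_iff_ne_empty.2 hS
      rw [Finset.mem_inter] at hv
      have huniq : ∀ u, u ∈ support ends CA → u ∈ support ends CB → u = v := by
        intro u hu1 hu2
        by_contra hne
        have hm := mtl hacyc hCircX hCircY hmemX hmemY hAeT hBeT hu1 hu2 hv.1 hv.2 hne
        rw [← hQer, hQe] at hm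
        exact hne (reach_empty hm)
      right; left
      refine ⟨CA, CB, hdisj, hDeq.symm ▸ rfl, hunbalA, hunbalB, v, ?_⟩
      ext u
      rw [Finset.mem_inter, Finset.mem_singleton]
      constructor
      · rintro ⟨h1, h2⟩; exact huniq u h1 h2
      · rintro rfl; exact hv
  · -- the circuits share edges: the symmetric difference is a balanced circuit
    left
    have hQne : Q.Nonempty := Finset.nonempty_iff_ne_empty.2 hQe
    have hQA : Q ⊆ CA := Finset.inter_subset_left
    have hQB : Q ⊆ CB := Finset.inter_subset_right
    have hsuppQA : support ends Q ⊆ support ends CA := support_mono hQA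
    have hsuppQB : support ends Q ⊆ support ends CB := support_mono hQB
    have hdegQle2 : ∀ v, degree ends Q v ≤ 2 := by
      intro v
      by_cases hv : v ∈ support ends Q
      · calc degree ends Q v ≤ degree ends CA v := degree_mono hQA v
          _ = 2 := hCircX.2.2 v (hsuppQA hv)
      · rw [degree_eq_zero_of_not_mem_support hv]; omega
    have hodd_ex : ∃ a, Odd (degree ends Q a) := by
      by_contra hcon
      push_neg at hcon
      have h2 : ∀ v ∈ support ends Q, degree ends Q v = 2 := by
        intro v hv
        have h1 : 1 ≤ degree ends Q v := by
          rw [mem_support_iff] at hv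
          obtain ⟨e, he, hve⟩ := hv
          exact one_le_degree he hve
        have h3 := hdegQle2 v
        have h4 : ¬ Odd (degree ends Q v) := hcon v
        rw [Nat.odd_iff] at h4
        omega
      obtain ⟨K, hKQ, hKcirc⟩ := circuitComp hQne h2
      exact hacyc K (hKQ.trans hQT) hKcirc
    obtain ⟨a, ha⟩ := hodd_ex
    have ha_supp : a ∈ support ends Q := mem_support_of_degree ha.pos
    obtain ⟨b, hba, hrab, hb⟩ := oddPair ha
    have hb_supp : b ∈ support ends Q := mem_support_of_degree hb.pos
    have hmtl2 : ∀ u v : V, u ∈ support ends CA → u ∈ support ends CB →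
        v ∈ support ends CA → v ∈ support ends CB → u ≠ v → Reach ends Q u v := by
      intro u v h1 h2 h3 h4 h5
      have hm := mtl hacyc hCircX hCircY hmemX hmemY hAeT hBeT h1 h2 h3 h4 h5
      rwa [← hQer] at hm
    have huniq : ∀ t, Odd (degree ends Q t) → t = a ∨ t = b := by
      intro t ht
      by_contra hcon
      push_neg at hcon
      obtain ⟨hta, htb⟩ := hcon
      have ht_supp : t ∈ support ends Q := mem_support_of_degree ht.pos
      have hdeg1 : ∀ w, Odd (degree ends Q w) → degree ends Q w = 1 := by
        intro w hw
        have := hdegQle2 w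
        rw [Nat.odd_iff] at hw
        omega
      exact threeLeaves hdegQle2 (Ne.symm hba) hta htb (hdeg1 a ha) (hdeg1 b hb)
        (hdeg1 t ht) hrab
        (hmtl2 t a (hsuppQA ht_supp) (hsuppQB ht_supp) (hsuppQA ha_supp)
          (hsuppQB ha_supp) hta)
    obtain ⟨e₀, he₀⟩ := hQne
    obtain ⟨p₀, q₀, hpq₀⟩ := exists_ends_rep (ends := ends) e₀
    have hp₀q₀ : p₀ ≠ q₀ := by
      rintro rfl
      exact hacyc {e₀}
        (by intro f hf; rw [Finset.mem_singleton] at hf; exact hQT (hf ▸ he₀))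
        (loop_singleton_circuit (by rw [hpq₀]; rfl))
    have hp₀Q : p₀ ∈ support ends Q :=
      mem_support_iff.2 ⟨e₀, he₀, by rw [hpq₀]; exact Sym2.mem_mk_left _ _⟩
    have hq₀Q : q₀ ∈ support ends Q :=
      mem_support_iff.2 ⟨e₀, he₀, by rw [hpq₀]; exact Sym2.mem_mk_right _ _⟩
    have key1 : ∀ v, degree ends D v + 2 * degree ends Q v
        = degree ends CA v + degree ends CB v := by
      intro v
      have h1 : degree ends D v + degree ends Q v = degree ends (CA ∪ CB) v := by
        rw [hDdef]
        exact degree_sdiff_add (hQA.trans Finset.subset_union_left) v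
      have h2 := degree_union_inter (ends := ends) CA CB v
      rw [← hQdef] at h2
      omega
    have hDsupp_deg : ∀ v ∈ support ends D,
        degree ends D v = 2 ∧ (1 ≤ degree ends Q v → (v = a ∨ v = b)) := by
      intro v hv
      have hv1 : 1 ≤ degree ends D v := by
        rw [mem_support_iff] at hv
        obtain ⟨d, hd, hvd⟩ := hv
        exact one_le_degree hd hvd
      have hk := key1 v
      by_cases vA : v ∈ support ends CA <;> by_cases vB : v ∈ support ends CB
      · have hdA : degree ends CA v = 2 := hCircX.2.2 v vA
        have hdB : degree ends CB v = 2 := hCircY.2.2 v vB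
        have hQv : 1 ≤ degree ends Q v := by
          by_cases hvp : v = p₀
          · have hne : v ≠ q₀ := by rw [hvp]; exact hp₀q₀
            have hr := hmtl2 v q₀ vA vB (hsuppQA hq₀Q) (hsuppQB hq₀Q) hne
            obtain ⟨g, hg, hvg⟩ := first_edge hr hne
            exact one_le_degree hg hvg
          · have hr := hmtl2 v p₀ vA vB (hsuppQA hp₀Q) (hsuppQB hp₀Q) hvp
            obtain ⟨g, hg, hvg⟩ := first_edge hr hvp
            exact one_le_degree hg hvg
        have hQle := hdegQle2 v
        have hQ1 : degree ends Q v = 1 := by omega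
        refine ⟨by omega, fun _ => huniq v (by rw [hQ1]; exact odd_one)⟩
      · have hdB : degree ends CB v = 0 := degree_eq_zero_of_not_mem_support vB
        have hQ0 : degree ends Q v ≤ 0 := hdB ▸ degree_mono hQB v
        have hdA : degree ends CA v = 2 := hCircX.2.2 v vA
        exact ⟨by omega, fun h => by exfalso; omega⟩
      · have hdA : degree ends CA v = 0 := degree_eq_zero_of_not_mem_support vA
        have hQ0 : degree ends Q v ≤ 0 := hdA ▸ degree_mono hQA v
        have hdB : degree ends CB v = 2 := hCircY.2.2 v vB
        exact ⟨by omega, fun h => by exfalso; omega⟩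
      · have hdA : degree ends CA v = 0 := degree_eq_zero_of_not_mem_support vA
        have hdB : degree ends CB v = 0 := degree_eq_zero_of_not_mem_support vB
        exact ⟨by omega, fun h => by exfalso; omega⟩
    set DX : Finset E := CA \ Q with hDXdef
    set DY : Finset E := CB \ Q with hDYdef
    have hDXD : DX ⊆ D := by
      rw [hDXdef, hDdef]
      exact Finset.sdiff_subset_sdiff Finset.subset_union_left (le_refl _)
    have hDYD : DY ⊆ D := by
      rw [hDYdef, hDdef]
      exact Finset.sdiff_subset_sdiff Finset.subset_union_right (le_refl _)
    have hDunion : D = DX ∪ DY := by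
      rw [hDdef, hDXdef, hDYdef]
      ext f
      simp only [Finset.mem_sdiff, Finset.mem_union]
      tauto
    have hparityX : ∀ v, (Odd (degree ends DX v) ↔ Odd (degree ends Q v)) := by
      intro v
      have h1 : degree ends DX v + degree ends Q v = degree ends CA v :=
        degree_sdiff_add hQA v
      have h2 : Even (degree ends CA v) := circuit_degree_even hCircX v
      rw [Nat.even_iff] at h2
      rw [Nat.odd_iff, Nat.odd_iff]
      omega
    have hreachab : Reach ends DX a b := by
      obtain ⟨t, hta, hrt, htodd⟩ := oddPair (F := DX) ((hparityX a).2 ha)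
      rcases huniq t ((hparityX t).1 htodd) with rfl | rfl
      · exact absurd rfl hta
      · exact hrt
    have hkey : ∀ (CC : Finset E), IsCircuit ends CC → Q ⊆ CC → CC \ Q ⊆ D →
        ∀ v, (∃ d ∈ CC \ Q, v ∈ ends d) → Reach ends D v a ∨ Reach ends D v b := by
      intro CC hCC hQCC hsub v hvd
      obtain ⟨d, hd, hvd⟩ := hvd
      have hvC : v ∈ support ends CC := mem_support_iff.2 ⟨d, (Finset.mem_sdiff.1 hd).1, hvd⟩
      have haC : a ∈ support ends CC := support_mono hQCC ha_supp
      have hvD : v ∈ support ends D := mem_support_iff.2 ⟨d, hsub hd, hvd⟩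
      have hr : Reach ends CC v a := hCC.2.1 v hvC a haC
      rcases splitReach (G := Q) hr with hl | ⟨w, g, hrw, hgC, hgQ, hwg, hcase⟩
      · exact Or.inl (hl.mono hsub)
      · have hw1 : 1 ≤ degree ends Q w := one_le_degree hgQ hwg
        rcases hcase with heq | ⟨f, hf, hwf⟩
        · subst heq
          rcases (hDsupp_deg w hvD).2 hw1 with rfl | rfl
          · exact Or.inl Relation.ReflTransGen.refl
          · exact Or.inr Relation.ReflTransGen.refl
        · have hwD : w ∈ support ends D := mem_support_iff.2 ⟨f, hsub hf, hwf⟩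
          rcases (hDsupp_deg w hwD).2 hw1 with rfl | rfl
          · exact Or.inl (hrw.mono hsub)
          · exact Or.inr (hrw.mono hsub)
    have hconn : ConnectedOn ends D := by
      have hDab : Reach ends D a b := hreachab.mono hDXD
      have reach_or : ∀ v ∈ support ends D, Reach ends D v a ∨ Reach ends D v b := by
        intro v hv
        rw [mem_support_iff] at hv
        obtain ⟨d, hd, hvd⟩ := hv
        rw [hDunion, Finset.mem_union] at hd
        rcases hd with hd | hd
        · exact hkey CA hCircX hQA hDXD v ⟨d, hd, hvd⟩
        · exact hkey CB hCircY hQB hDYD v ⟨d, hd, hvd⟩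
      intro u hu w hw
      rcases reach_or u hu with h1 | h1 <;> rcases reach_or w hw with h2 | h2
      · exact h1.trans h2.symm
      · exact h1.trans (hDab.trans h2.symm)
      · exact h1.trans (hDab.symm.trans h2.symm)
      · exact h1.trans h2.symm
    refine ⟨⟨⟨x, hxD⟩, hconn, fun v hv => (hDsupp_deg v hv).1⟩, ?_⟩
    rw [hnegD, Finset.card_insert_of_notMem (by simp [hxy]), Finset.card_singleton]
    exact even_two


end SignedCircuitCover
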